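/- arXiv:2011.09147 — 6 statements merged into one kernel-verified Lean document; each statement's English description precedes it below -/
import Mathlib

section
/- For 0 < a < 1 and 0 < α < 1, the function f_V(v) = (α a^α / (1 - a^α + a^α log a^α)) · (v^α - 1)/v on [1, 1/a] is a probability density: it is nonnegative and ∫₁^{1/a} f_V(v) dv = 1. -/
open MeasureTheory Real

theorem stmt_9 (a α : ℝ) (ha0 : 0 < a) (ha1 : a < 1) (hα0 : 0 < α) (hα1 : α < 1) :
    (∀ v ∈ Set.Icc (1:ℝ) (1/a),
        0 ≤ α * a ^ α / (1 - a ^ α + a ^ α * Real.log (a ^ α)) * ((v ^ α - 1) / v)) ∧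
    ∫ v in (1:ℝ)..(1/a),
        α * a ^ α / (1 - a ^ α + a ^ α * Real.log (a ^ α)) * ((v ^ α - 1) / v) = 1 := by
  have hx0 : 0 < a ^ α := Real.rpow_pos_of_pos ha0 α
  have hx1 : a ^ α < 1 := Real.rpow_lt_one ha0.le ha1 hα0
  have hlog : Real.log (a ^ α) = α * Real.log a := Real.log_rpow ha0 α
  have hD : 0 < 1 - a ^ α + a ^ α * Real.log (a ^ α) := by
    set x := a ^ α with hxdef
    have hxne : (x⁻¹ : ℝ) ≠ 1 := by
      intro h
      have : x = 1 := by
        have := congrArg Inv.inv h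
        simpa using this
      linarith
    have h1 := Real.log_lt_sub_one_of_pos (inv_pos.mpr hx0) hxne
    rw [Real.log_inv] at h1
    have h2 : 0 < x * (x⁻¹ - 1 + Real.log x) := mul_pos hx0 (by linarith)
    have h3 : x * x⁻¹ = 1 := mul_inv_cancel₀ hx0.ne'
    nlinarith [h2, h3]
  have hb : 1 < 1 / a := one_lt_one_div ha0 ha1
  constructor
  · intro v hv
    have hv0 : (0:ℝ) < v := lt_of_lt_of_le one_pos hv.1
    have hv1 : (1:ℝ) ≤ v ^ α := by
      calc (1:ℝ) = 1 ^ α := (Real.one_rpow α).symm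
        _ ≤ v ^ α := Real.rpow_le_rpow zero_le_one hv.1 hα0.le
    have : 0 ≤ (v ^ α - 1) / v := div_nonneg (by linarith) hv0.le
    exact mul_nonneg (div_nonneg (mul_nonneg hα0.le hx0.le) hD.le) this
  · rw [intervalIntegral.integral_const_mul]
    have heq : Set.EqOn (fun v : ℝ => (v ^ α - 1) / v)
        (fun v : ℝ => v ^ (α - 1) - v⁻¹) (Set.uIcc 1 (1/a)) := by
      intro v hv
      rw [Set.uIcc_of_le hb.le] at hv
      have hv0 : (0:ℝ) < v := lt_of_lt_of_le one_pos hv.1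
      have h1 : v ^ (α - 1) = v ^ α / v := by
        rw [Real.rpow_sub hv0, Real.rpow_one]
      simp only
      rw [h1, sub_div, one_div]
    rw [intervalIntegral.integral_congr heq]
    have hi1 : IntervalIntegrable (fun v : ℝ => v ^ (α - 1)) volume 1 (1/a) :=
      intervalIntegral.intervalIntegrable_rpow' (by linarith)
    have hi2 : IntervalIntegrable (fun v : ℝ => v⁻¹) volume 1 (1/a) := by
      apply intervalIntegral.intervalIntegrable_inv
      · intro v hv
        rw [Set.uIcc_of_le hb.le] at hv
        exact (lt_of_lt_of_le one_pos hv.1).ne'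
      · exact continuousOn_id
    rw [intervalIntegral.integral_sub hi1 hi2,
      integral_rpow (Or.inl (by linarith : (-1:ℝ) < α - 1)),
      integral_inv (by
        rw [Set.uIcc_of_le hb.le]
        intro h
        exact absurd h.1 (by norm_num))]
    have hα' : α - 1 + 1 = α := by ring
    rw [hα', Real.one_rpow, div_one, one_div, Real.inv_rpow ha0.le, Real.log_inv, hlog,
      div_mul_eq_mul_div, div_eq_one_iff_eq (by rw [hlog] at hD; exact hD.ne')]
    field_simp
    ring
end

section
/- For fixed 0 < a < 1, lim_{α→0⁺} (α a^α/(1 - a^α + a^α log a^α)) · (v^α - 1)/v = 2 log v / (v (log a)²) for every v ∈ [1, 1/a], and lim_{α→0⁺} of the OU-CTS compound Poisson intensity c β^α Γ(1-α)(1 - a^α + a^α log a^α)/(T b α² a^α) equals c (log a)²/(2 T b). -/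
/-!
With `L = log a` we have `a ^ α = exp (L α)`, so `1 - a ^ α + a ^ α * log (a ^ α)` is
`1 - eˣ + x eˣ` at `x = L α`; by L'Hôpital it is `(L α)² / 2 + o(α²)`. Both limits then
follow from `(v ^ α - 1) / α → log v` and `a ^ α, β ^ α, Γ(1 - α) → 1`.
-/

open Real Filter Topology

theorem tendsto_one_sub_exp_add_exp_mul_div_sq (L : ℝ) :
    Tendsto (fun x => (1 - exp (L * x) + exp (L * x) * (L * x)) / x ^ 2) (𝓝[≠] 0)
      (𝓝 (L ^ 2 / 2)) := by
  refine HasDerivAt.lhopital_zero_nhdsNE (f' := fun x => L ^ 2 * x * exp (L * x))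
    (g' := fun x => 2 * x) (Eventually.of_forall fun x => ?_)
    (Eventually.of_forall fun x => ?_) ?_ ?_ ?_ ?_
  · have hexp := ((hasDerivAt_id' x).const_mul L).exp
    exact (((hasDerivAt_const x 1).sub hexp).add
      (hexp.mul ((hasDerivAt_id' x).const_mul L))).congr_deriv (by ring)
  · simpa using hasDerivAt_pow 2 x
  · filter_upwards [self_mem_nhdsWithin] with x hx
    exact mul_ne_zero two_ne_zero hx
  · exact tendsto_nhdsWithin_of_tendsto_nhds <|
      (by fun_prop : Continuous fun x => 1 - exp (L * x) + exp (L * x) * (L * x)).tendsto' 0 0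
        (by simp)
  · exact tendsto_nhdsWithin_of_tendsto_nhds <|
      (by fun_prop : Continuous fun x : ℝ => x ^ 2).tendsto' 0 0 (by simp)
  · have : Tendsto (fun x => L ^ 2 * exp (L * x) / 2) (𝓝[≠] 0) (𝓝 (L ^ 2 / 2)) :=
      tendsto_nhdsWithin_of_tendsto_nhds <|
        (by fun_prop : Continuous fun x => L ^ 2 * exp (L * x) / 2).tendsto' 0 _ (by simp)
    refine this.congr' ?_
    filter_upwards [self_mem_nhdsWithin] with x (hx : x ≠ 0)
    field_simp

theorem tendsto_one_sub_rpow_add_rpow_mul_log_rpow_div_sq {a : ℝ} (ha : 0 < a) :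
    Tendsto (fun α => (1 - a ^ α + a ^ α * log (a ^ α)) / α ^ 2) (𝓝[≠] 0)
      (𝓝 (log a ^ 2 / 2)) := by
  simpa only [rpow_def_of_pos ha, log_exp] using tendsto_one_sub_exp_add_exp_mul_div_sq (log a)

theorem tendsto_const_rpow_nhds_zero {x : ℝ} (hx : x ≠ 0) :
    Tendsto (fun α : ℝ => x ^ α) (𝓝 0) (𝓝 1) := by
  simpa using (continuousAt_const_rpow hx (b := 0)).tendsto

theorem tendsto_Gamma_one_sub_nhds_zero :
    Tendsto (fun α : ℝ => Gamma (1 - α)) (𝓝 0) (𝓝 1) := by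
  have hcont : ContinuousAt Gamma 1 :=
    (differentiableAt_Gamma fun m => by linarith [m.cast_nonneg (α := ℝ)]).continuousAt
  have : ContinuousAt (fun α : ℝ => Gamma (1 - α)) 0 :=
    hcont.comp_of_eq (by fun_prop) (sub_zero 1)
  simpa using this.tendsto

theorem stmt_10_general (a c β T b : ℝ) (ha0 : 0 < a) (ha1 : a < 1)
    (hβ : 0 < β) :
    (∀ v ∈ Set.Icc (1:ℝ) (1/a),
        Tendsto (fun α : ℝ =>
            α * a ^ α / (1 - a ^ α + a ^ α * Real.log (a ^ α)) * ((v ^ α - 1) / v))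
          (nhdsWithin 0 (Set.Ioi 0))
          (nhds (2 * Real.log v / (v * (Real.log a) ^ 2)))) ∧
    Tendsto (fun α : ℝ =>
        c * β ^ α * Real.Gamma (1 - α) * (1 - a ^ α + a ^ α * Real.log (a ^ α))
          / (T * b * α ^ 2 * a ^ α))
      (nhdsWithin 0 (Set.Ioi 0))
      (nhds (c * (Real.log a) ^ 2 / (2 * T * b))) := by
  have hL : log a ≠ 0 := log_ne_zero_of_pos_of_ne_one ha0 ha1.ne
  have hdefect := (tendsto_one_sub_rpow_add_rpow_mul_log_rpow_div_sq ha0).mono_left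
    (nhdsGT_le_nhdsNE 0)
  have hpow_a := (tendsto_const_rpow_nhds_zero ha0.ne').mono_left
    (nhdsWithin_le_nhds (s := Set.Ioi 0))
  refine ⟨fun v hv => ?_, ?_⟩
  · have := ((hpow_a.mul (hdefect.inv₀ (by positivity))).mul
      (tendsto_rpow_sub_one_log (one_pos.trans_le hv.1))).div_const v
    convert this.congr' ?_ using 2
    · field_simp
    · filter_upwards [self_mem_nhdsWithin] with α (hα : 0 < α)
      field_simp
  · have hprefactor :
        Tendsto (fun α : ℝ => c * β ^ α * Gamma (1 - α)) (𝓝[>] 0) (𝓝 (c * 1 * 1)) :=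
      (((tendsto_const_rpow_nhds_zero hβ.ne').const_mul c).mul
        tendsto_Gamma_one_sub_nhds_zero).mono_left nhdsWithin_le_nhds
    convert (hprefactor.mul (hdefect.mul (hpow_a.inv₀ one_ne_zero))).div_const (T * b)
      using 2 with α
    · ring
    · field_simp

theorem stmt_10 (a c β T b : ℝ) (ha0 : 0 < a) (ha1 : a < 1)
    (hc : 0 < c) (hβ : 0 < β) (hT : 0 < T) (hb : 0 < b) :
    (∀ v ∈ Set.Icc (1:ℝ) (1/a),
        Tendsto (fun α : ℝ =>
            α * a ^ α / (1 - a ^ α + a ^ α * Real.log (a ^ α)) * ((v ^ α - 1) / v))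
          (nhdsWithin 0 (Set.Ioi 0))
          (nhds (2 * Real.log v / (v * (Real.log a) ^ 2)))) ∧
    Tendsto (fun α : ℝ =>
        c * β ^ α * Real.Gamma (1 - α) * (1 - a ^ α + a ^ α * Real.log (a ^ α))
          / (T * b * α ^ 2 * a ^ α))
      (nhdsWithin 0 (Set.Ioi 0))
      (nhds (c * (Real.log a) ^ 2 / (2 * T * b))) :=
  stmt_10_general a c β T b ha0 ha1 hβ
end

section
/- Let ψ(u) be the log-characteristic function of an infinitely divisible law with triplet (γ, σ, ν), ν(x) = k(x)/|x| self-decomposable, and let 0 < a < 1. Then ψ(u) - ψ(au) equals the log-characteristic function of the infinitely divisible law with triplet (γ_a, σ_a, ν_a) where γ_a = γ(1-a) - a ∫_ℝ sign(x)(1_{|x|≤1/a} - 1_{|x|≤1}) k(x) dx, σ_a = σ√(1-a²), and ν_a(x) = (k(x) - k(x/a))/|x|. -/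
/-!
Substituting `x = y / a` in the Lévy integral of `ψ(au)` turns the jump density `ν` into the
density `ν(y/a)/a = k(y/a)/|y|` of the scaled jumps, and the truncation `1_{|x| ≤ 1}` into
`1_{|y| ≤ a}`. Subtracting from `ψ(u)` leaves the density `ν_a`; the mismatch of the truncations,
`∫ x (1_{|x| ≤ 1/a} - 1_{|x| ≤ 1}) ν(x) dx = ∫ sign x (1_{|x| ≤ 1/a} - 1_{|x| ≤ 1}) k(x) dx`,
is absorbed in the drift. All integrals converge because the compensated integrand is
`O(min 1 x²)`, uniformly after rescaling by `a ≤ 1`.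
-/

open MeasureTheory Real Complex

/-- Log-characteristic function of an infinitely divisible law with triplet `(γ, σ, ν)`
in the Lévy–Khintchine representation. -/
noncomputable def lkLogChf (γ σ : ℝ) (ν : ℝ → ℝ) (u : ℝ) : ℂ :=
  Complex.I * u * γ - σ ^ 2 * u ^ 2 / 2 +
    ∫ x : ℝ, (Complex.exp (Complex.I * u * x) - 1
        - Complex.I * u * x * (if |x| ≤ 1 then 1 else 0)) * (ν x)

theorem norm_exp_I_mul_ofReal_sub_one_le_two (t : ℝ) : ‖Complex.exp (I * t) - 1‖ ≤ 2 := by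
  calc ‖Complex.exp (I * t) - 1‖ ≤ ‖Complex.exp (I * t)‖ + ‖(1 : ℂ)‖ := norm_sub_le _ _
    _ = 2 := by rw [norm_exp_I_mul_ofReal, norm_one]; norm_num

theorem norm_exp_I_mul_ofReal_sub_one_sub_le (t : ℝ) :
    ‖Complex.exp (I * t) - 1 - I * t‖ ≤ 2 * t ^ 2 := by
  have hIt : ‖I * (t : ℂ)‖ = |t| := by simp
  rcases le_or_gt |t| 1 with ht | ht
  · calc ‖Complex.exp (I * t) - 1 - I * t‖ ≤ ‖I * (t : ℂ)‖ ^ 2 :=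
          Complex.norm_exp_sub_one_sub_id_le (hIt ▸ ht)
      _ ≤ 2 * t ^ 2 := by rw [hIt, sq_abs]; nlinarith [sq_nonneg t]
  · calc ‖Complex.exp (I * t) - 1 - I * t‖ ≤ ‖Complex.exp (I * t) - 1‖ + ‖I * (t : ℂ)‖ :=
          norm_sub_le _ _
      _ ≤ |t| + |t| := by
          rw [hIt]; gcongr; simpa using norm_exp_I_mul_ofReal_sub_one_le (x := t)
      _ ≤ 2 * t ^ 2 := by nlinarith [sq_abs t]

noncomputable def lkIntegrand (u x : ℝ) : ℂ :=
  Complex.exp (I * u * x) - 1 - I * u * x * (if |x| ≤ 1 then 1 else 0)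

theorem lkLogChf_eq (γ σ : ℝ) (ν : ℝ → ℝ) (u : ℝ) :
    lkLogChf γ σ ν u = I * u * γ - σ ^ 2 * u ^ 2 / 2 + ∫ x, lkIntegrand u x * ν x := rfl

theorem measurable_lkIntegrand (u : ℝ) : Measurable (lkIntegrand u) :=
  (by fun_prop : Measurable fun x : ℝ => Complex.exp (I * u * x) - 1).sub <|
    (by fun_prop : Measurable fun x : ℝ => I * u * x).mul <|
      Measurable.ite (measurableSet_le (by fun_prop) measurable_const)
        measurable_const measurable_const

theorem norm_lkIntegrand_le (u x : ℝ) :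
    ‖lkIntegrand u x‖ ≤ 2 * (1 + u ^ 2) * min 1 (x ^ 2) := by
  have harg : I * (u : ℂ) * x = I * ((u * x : ℝ) : ℂ) := by push_cast; ring
  rcases le_or_gt |x| 1 with hx | hx
  · have hmin : min 1 (x ^ 2) = x ^ 2 := min_eq_right (by nlinarith [sq_abs x, abs_nonneg x])
    calc ‖lkIntegrand u x‖ ≤ 2 * (u * x) ^ 2 := by
          simpa [lkIntegrand, hx, harg] using norm_exp_I_mul_ofReal_sub_one_sub_le (u * x)
      _ ≤ 2 * (1 + u ^ 2) * min 1 (x ^ 2) := by rw [hmin]; nlinarith [sq_nonneg x]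
  · have hmin : min 1 (x ^ 2) = 1 := min_eq_left (by nlinarith [sq_abs x])
    calc ‖lkIntegrand u x‖ ≤ 2 := by
          simpa [lkIntegrand, hx.not_ge, harg] using norm_exp_I_mul_ofReal_sub_one_le_two (u * x)
      _ ≤ 2 * (1 + u ^ 2) * min 1 (x ^ 2) := by rw [hmin]; nlinarith [sq_nonneg u]

theorem integrable_mul_of_norm_le_min_one_sq {f : ℝ → ℂ} {ν : ℝ → ℝ} {C : ℝ}
    (hf : AEStronglyMeasurable f volume) (hfC : ∀ x, ‖f x‖ ≤ C * min 1 (x ^ 2))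
    (hν : Integrable (fun x => min 1 (x ^ 2) * ν x)) :
    Integrable (fun x => f x * ν x) := by
  have hmeas : Measurable fun x : ℝ => ((min 1 (x ^ 2) : ℝ) : ℂ) := by fun_prop
  have hbdd : Integrable
      (fun x => f x * ((min 1 (x ^ 2) : ℝ) : ℂ)⁻¹ * ((min 1 (x ^ 2) * ν x : ℝ) : ℂ)) :=
    hν.ofReal.bdd_mul (hf.mul hmeas.inv.aestronglyMeasurable) <| by
      filter_upwards [Measure.ae_ne volume 0] with x hx
      have hpos : 0 < min 1 (x ^ 2) := lt_min one_pos (by positivity)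
      rw [← div_eq_mul_inv, norm_div, Complex.norm_real, Real.norm_of_nonneg hpos.le,
        div_le_iff₀ hpos]
      exact hfC x
  refine hbdd.congr ?_
  filter_upwards [Measure.ae_ne volume 0] with x hx
  have hpos : ((min 1 (x ^ 2) : ℝ) : ℂ) ≠ 0 := by
    exact_mod_cast (lt_min one_pos (by positivity : 0 < x ^ 2)).ne'
  push_cast at hpos ⊢
  field_simp

/-- Scaling the frequency is scaling the jump; only the truncation `1_{|x| ≤ 1}` does not scale. -/
theorem lkIntegrand_mul_left {a : ℝ} (ha : 0 < a) (u x : ℝ) :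
    lkIntegrand (a * u) x = lkIntegrand u (a * x) +
      I * u * a * ((x * ((if |x| ≤ 1 / a then (1 : ℝ) else 0) - (if |x| ≤ 1 then (1 : ℝ) else 0))
        : ℝ) : ℂ) := by
  have hax : |a * x| ≤ 1 ↔ |x| ≤ 1 / a := by
    rw [abs_mul, abs_of_pos ha, le_div_iff₀ ha, mul_comm]
  have harg : I * ((a * u : ℝ) : ℂ) * x = I * u * ((a * x : ℝ) : ℂ) := by push_cast; ring
  simp only [lkIntegrand, hax, harg]
  split_ifs <;> push_cast <;> ring

section LevyDensity

variable {ν : ℝ → ℝ} (hν : Integrable (fun x => min 1 (x ^ 2) * ν x))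
include hν

theorem integrable_lkIntegrand_mul (u : ℝ) : Integrable (fun x => lkIntegrand u x * ν x) :=
  integrable_mul_of_norm_le_min_one_sq (measurable_lkIntegrand u).aestronglyMeasurable
    (norm_lkIntegrand_le u) hν

theorem integrable_lkIntegrand_comp_mul_left_mul {a : ℝ} (ha : |a| ≤ 1) (u : ℝ) :
    Integrable (fun x => lkIntegrand u (a * x) * ν x) := by
  refine integrable_mul_of_norm_le_min_one_sq (C := 2 * (1 + u ^ 2))
    ((measurable_lkIntegrand u).comp (measurable_const_mul a)).aestronglyMeasurable
    (fun x => (norm_lkIntegrand_le u (a * x)).trans ?_) hν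
  have hax : (a * x) ^ 2 ≤ x ^ 2 := by
    rw [mul_pow]
    exact mul_le_of_le_one_left (sq_nonneg x) ((sq_le_one_iff_abs_le_one a).mpr ha)
  gcongr

theorem integrable_lkIntegrand_mul_rescaled {a : ℝ} (ha0 : 0 < a) (ha1 : a ≤ 1) (u : ℝ) :
    Integrable (fun y => lkIntegrand u y * (ν (y / a) / a : ℝ)) := by
  have h := ((integrable_lkIntegrand_comp_mul_left_mul hν ((abs_of_pos ha0).le.trans ha1)
    u).comp_div ha0.ne').const_mul ((a⁻¹ : ℝ) : ℂ)
  refine h.congr (Filter.Eventually.of_forall fun y => ?_)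
  simp only [mul_div_cancel₀ y ha0.ne']
  push_cast
  ring

theorem integral_lkIntegrand_mul_left_mul {a : ℝ} (ha0 : 0 < a) (ha1 : a ≤ 1) (u : ℝ) :
    ∫ x, lkIntegrand (a * u) x * ν x =
      (∫ y, lkIntegrand u y * (ν (y / a) / a : ℝ)) + I * u * a *
        ((∫ x, x * ((if |x| ≤ 1 / a then (1 : ℝ) else 0) - (if |x| ≤ 1 then (1 : ℝ) else 0))
          * ν x : ℝ) : ℂ) := by
  have hsub : (∫ x, lkIntegrand (a * u) x * ν x) - ∫ x, lkIntegrand u (a * x) * ν x =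
      I * u * a * ((∫ x, x * ((if |x| ≤ 1 / a then (1 : ℝ) else 0)
        - (if |x| ≤ 1 then (1 : ℝ) else 0)) * ν x : ℝ) : ℂ) := by
    rw [← integral_sub (integrable_lkIntegrand_mul hν _)
      (integrable_lkIntegrand_comp_mul_left_mul hν ((abs_of_pos ha0).le.trans ha1) u),
      ← integral_complex_ofReal, ← integral_const_mul]
    refine integral_congr_ae (Filter.Eventually.of_forall fun x => ?_)
    simp only [lkIntegrand_mul_left ha0]
    push_cast
    ring
  have hscale :
      ∫ x, lkIntegrand u (a * x) * ν x = ∫ y, lkIntegrand u y * (ν (y / a) / a : ℝ) := by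
    have h := Measure.integral_comp_mul_left (fun y => lkIntegrand u y * ν (y / a)) a
    simp only [mul_div_cancel_left₀ _ ha0.ne', abs_inv, abs_of_pos ha0] at h
    rw [h, Complex.real_smul, ← integral_const_mul]
    congr 1 with y
    push_cast
    ring
  rw [← hscale, ← hsub, add_sub_cancel]

end LevyDensity

theorem mul_div_abs_eq_sign_mul {x : ℝ} (hx : x ≠ 0) (c : ℝ) :
    x * (c / |x|) = Real.sign x * c := by
  rcases hx.lt_or_gt with hx | hx
  · rw [abs_of_neg hx, Real.sign_of_neg hx]; field_simp
  · rw [abs_of_pos hx, Real.sign_of_pos hx]; field_simp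

theorem stmt_12_general (γ σ a : ℝ) (k ν : ℝ → ℝ) (ha0 : 0 < a) (ha1 : a < 1)
    (hν : ∀ x : ℝ, x ≠ 0 → ν x = k x / |x|)
    (hint : Integrable (fun x : ℝ => min 1 (x ^ 2) * ν x)) :
    ∀ u : ℝ,
      lkLogChf γ σ ν u - lkLogChf γ σ ν (a * u)
        = lkLogChf
            (γ * (1 - a) -
              a * ∫ x : ℝ, Real.sign x *
                ((if |x| ≤ 1 / a then (1:ℝ) else 0) - (if |x| ≤ 1 then (1:ℝ) else 0)) * k x)
            (σ * Real.sqrt (1 - a ^ 2))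
            (fun x => (k x - k (x / a)) / |x|) u := by
  intro u
  have hdensity : ∀ᵐ x, lkIntegrand u x * (((k x - k (x / a)) / |x| : ℝ) : ℂ) =
      lkIntegrand u x * ν x - lkIntegrand u x * (ν (x / a) / a : ℝ) := by
    filter_upwards [Measure.ae_ne volume 0] with x hx
    rw [hν x hx, hν _ (div_ne_zero hx ha0.ne'), abs_div, abs_of_pos ha0, ← mul_sub,
      ← Complex.ofReal_sub]
    field_simp
  have hdrift : ∀ᵐ x,
      x * ((if |x| ≤ 1 / a then (1 : ℝ) else 0) - (if |x| ≤ 1 then (1 : ℝ) else 0)) * ν x =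
        Real.sign x * ((if |x| ≤ 1 / a then (1 : ℝ) else 0) - (if |x| ≤ 1 then (1 : ℝ) else 0))
          * k x := by
    filter_upwards [Measure.ae_ne volume 0] with x hx
    rw [hν x hx, mul_right_comm, mul_div_abs_eq_sign_mul hx, mul_right_comm]
  have hσ : ((σ * Real.sqrt (1 - a ^ 2) : ℝ) : ℂ) ^ 2 = σ ^ 2 * (1 - a ^ 2) := by
    rw [← Complex.ofReal_pow, mul_pow, Real.sq_sqrt (by nlinarith)]
    push_cast
    ring
  rw [lkLogChf_eq, lkLogChf_eq, lkLogChf_eq, integral_lkIntegrand_mul_left_mul hint ha0 ha1.le,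
    integral_congr_ae hdensity, integral_sub (integrable_lkIntegrand_mul hint u)
      (integrable_lkIntegrand_mul_rescaled hint ha0 ha1.le u), integral_congr_ae hdrift, hσ]
  push_cast
  ring

theorem stmt_12 (γ σ a : ℝ) (k ν : ℝ → ℝ) (ha0 : 0 < a) (ha1 : a < 1)
    (hk0 : ∀ x, 0 ≤ k x)
    (hmono : MonotoneOn k (Set.Iio (0:ℝ)))
    (hanti : AntitoneOn k (Set.Ioi (0:ℝ)))
    (hν : ∀ x : ℝ, x ≠ 0 → ν x = k x / |x|)
    (hint : Integrable (fun x : ℝ => min 1 (x ^ 2) * ν x)) :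
    ∀ u : ℝ,
      lkLogChf γ σ ν u - lkLogChf γ σ ν (a * u)
        = lkLogChf
            (γ * (1 - a) -
              a * ∫ x : ℝ, Real.sign x *
                ((if |x| ≤ 1 / a then (1:ℝ) else 0) - (if |x| ≤ 1 then (1:ℝ) else 0)) * k x)
            (σ * Real.sqrt (1 - a ^ 2))
            (fun x => (k x - k (x / a)) / |x|) u :=
  stmt_12_general γ σ a k ν ha0 ha1 hν hint
end

section
/- For a CTS-OU process the compound Poisson intensity is Λ_a = c Γ(1-α) β^α (1 - a^α)/α: that is, with ν_2(x) = c a^α (e^{-βx} - e^{-βx/a})/x^{1+α} for x > 0, 0 < α < 1, β > 0, c > 0, 0 < a < 1, one has ∫₀^∞ ν_2(x) dx = c Γ(1-α) β^α (1-a^α)/α. -/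
/-!
Write `ν₂(x) = c a^α (e^{-px} - e^{-qx}) / x^{1+α}` with `p = β`, `q = β / a`. Integrating by parts
against `x^{-α}`, whose derivative is `-α x^{-1-α}`, the boundary terms vanish (the difference of
exponentials is `O(x)` at `0`) and what remains are the Gamma integrals
`∫₀^∞ x^{-α} e^{-rx} dx = Γ(1-α) r^{α-1}`, giving `Γ(1-α) (q^α - p^α) / α`.
-/

open MeasureTheory Real Filter Set Topology

lemma integrableOn_rpow_neg_mul_exp_neg_mul {α r : ℝ} (hα : α < 1) (hr : 0 < r) :
    IntegrableOn (fun x : ℝ => x ^ (-α) * exp (-r * x)) (Ioi 0) := by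
  simpa only [rpow_one] using
    integrableOn_rpow_mul_exp_neg_mul_rpow (p := 1) (by linarith) zero_lt_one hr

lemma integral_rpow_neg_mul_exp_neg_mul {α r : ℝ} (hα : α < 1) (hr : 0 < r) :
    ∫ x in Ioi (0 : ℝ), x ^ (-α) * exp (-r * x) = r ^ (α - 1) * Gamma (1 - α) := by
  have h := integral_rpow_mul_exp_neg_mul_Ioi (a := 1 - α) (by linarith) hr
  rw [one_div, inv_rpow hr.le, ← rpow_neg hr.le, neg_sub] at h
  rw [← h]
  refine setIntegral_congr_fun measurableSet_Ioi fun x _ => ?_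
  ring_nf

lemma exp_neg_mul_sub_exp_neg_mul_nonneg {p q x : ℝ} (hpq : p ≤ q) (hx : 0 ≤ x) :
    0 ≤ exp (-p * x) - exp (-q * x) :=
  sub_nonneg.2 <| exp_le_exp.2 <| by nlinarith

lemma exp_neg_mul_sub_exp_neg_mul_le (p q x : ℝ) :
    exp (-p * x) - exp (-q * x) ≤ (q - p) * x * exp (-p * x) := by
  have h := one_sub_le_exp_neg ((q - p) * x)
  have hsplit : exp (-q * x) = exp (-p * x) * exp (-((q - p) * x)) := by
    rw [← exp_add]; ring_nf
  rw [hsplit]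
  nlinarith [exp_pos (-p * x)]

section Frullani

variable {α p q : ℝ}

lemma tendsto_exp_neg_mul_sub_exp_neg_mul_mul_rpow_nhdsGT_zero (hα : α < 1) (hpq : p ≤ q) :
    Tendsto (fun x : ℝ => (exp (-p * x) - exp (-q * x)) * x ^ (-α)) (𝓝[>] 0) (𝓝 0) := by
  have hbound : Tendsto (fun x : ℝ => (q - p) * x ^ (1 - α) * exp (-p * x)) (𝓝[>] 0) (𝓝 0) := by
    have hcont : ContinuousAt (fun x : ℝ => (q - p) * x ^ (1 - α) * exp (-p * x)) 0 := by
      have := continuousAt_rpow_const 0 (1 - α) (Or.inr (by linarith))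
      fun_prop
    simpa [zero_rpow (by linarith : (1 : ℝ) - α ≠ 0)] using
      hcont.tendsto.mono_left nhdsWithin_le_nhds
  refine squeeze_zero' ?_ ?_ hbound
  · filter_upwards [self_mem_nhdsWithin] with x (hx : 0 < x)
    exact mul_nonneg (exp_neg_mul_sub_exp_neg_mul_nonneg hpq hx.le) (rpow_pos_of_pos hx _).le
  · filter_upwards [self_mem_nhdsWithin] with x (hx : 0 < x)
    calc (exp (-p * x) - exp (-q * x)) * x ^ (-α)
        ≤ (q - p) * x * exp (-p * x) * x ^ (-α) :=
          mul_le_mul_of_nonneg_right (exp_neg_mul_sub_exp_neg_mul_le p q x)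
            (rpow_pos_of_pos hx _).le
      _ = (q - p) * x ^ (1 - α) * exp (-p * x) := by
          rw [sub_eq_add_neg 1 α, rpow_add hx, rpow_one]; ring

lemma integrableOn_exp_neg_mul_sub_exp_neg_mul_div_rpow (hα : α < 1) (hp : 0 < p) (hpq : p ≤ q) :
    IntegrableOn (fun x : ℝ => (exp (-p * x) - exp (-q * x)) / x ^ (1 + α)) (Ioi 0) := by
  refine ((integrableOn_rpow_neg_mul_exp_neg_mul hα hp).const_mul (q - p)).mono' ?_ ?_
  · refine ContinuousOn.aestronglyMeasurable ?_ measurableSet_Ioi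
    exact ContinuousOn.div (by fun_prop)
      (continuousOn_id.rpow_const fun x (hx : 0 < x) => Or.inl hx.ne')
      fun x (hx : 0 < x) => (rpow_pos_of_pos hx _).ne'
  · filter_upwards [self_mem_ae_restrict measurableSet_Ioi] with x (hx : 0 < x)
    have hpow : 0 < x ^ (1 + α) := rpow_pos_of_pos hx _
    rw [norm_div, norm_of_nonneg (exp_neg_mul_sub_exp_neg_mul_nonneg hpq hx.le),
      norm_of_nonneg hpow.le, div_le_iff₀ hpow]
    calc exp (-p * x) - exp (-q * x) ≤ (q - p) * x * exp (-p * x) :=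
          exp_neg_mul_sub_exp_neg_mul_le p q x
      _ = (q - p) * (x ^ (-α) * exp (-p * x)) * x ^ (1 + α) := by
          have hx1 : x ^ (-α) * x ^ (1 + α) = x := by rw [← rpow_add hx]; norm_num
          linear_combination (q - p) * exp (-p * x) * hx1.symm

theorem integral_exp_neg_mul_sub_exp_neg_mul_div_rpow_of_le (hα0 : 0 < α) (hα1 : α < 1)
    (hp : 0 < p) (hpq : p ≤ q) :
    ∫ x in Ioi (0 : ℝ), (exp (-p * x) - exp (-q * x)) / x ^ (1 + α)
      = Gamma (1 - α) * (q ^ α - p ^ α) / α := by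
  have hq : 0 < q := hp.trans_le hpq
  set I := ∫ x in Ioi (0 : ℝ), (exp (-p * x) - exp (-q * x)) / x ^ (1 + α)
  set u : ℝ → ℝ := fun x => exp (-p * x) - exp (-q * x)
  set u' : ℝ → ℝ := fun x => q * exp (-q * x) - p * exp (-p * x)
  set v : ℝ → ℝ := fun x => x ^ (-α)
  set v' : ℝ → ℝ := fun x => -α * x ^ (-α - 1)
  have hu : ∀ x ∈ Ioi (0 : ℝ), HasDerivAt u (u' x) x := fun x _ =>
    (((hasDerivAt_id x).const_mul (-p)).exp.sub ((hasDerivAt_id x).const_mul (-q)).exp).congr_deriv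
      (by simp only [u', id]; ring)
  have hv : ∀ x ∈ Ioi (0 : ℝ), HasDerivAt v (v' x) x := fun x hx => by
    simpa [v, v', mul_comm] using hasDerivAt_rpow_const (p := -α) (Or.inl hx.ne')
  have huv' : EqOn (u * v') (fun x => -α * (u x / x ^ (1 + α))) (Ioi 0) := fun x hx => by
    simp only [Pi.mul_apply, v', div_eq_mul_inv, ← rpow_neg hx.le, neg_add']
    ring_nf
  have hu'v : ∀ x, u' x * v x =
      q * (x ^ (-α) * exp (-q * x)) - p * (x ^ (-α) * exp (-p * x)) := fun x => by
    simp only [u', v]; ring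
  have hIq := integrableOn_rpow_neg_mul_exp_neg_mul hα1 hq
  have hIp := integrableOn_rpow_neg_mul_exp_neg_mul hα1 hp
  have h_infty : Tendsto (u * v) atTop (𝓝 0) := by
    have h := (tendsto_rpow_mul_exp_neg_mul_atTop_nhds_zero (-α) p hp).sub
      (tendsto_rpow_mul_exp_neg_mul_atTop_nhds_zero (-α) q hq)
    rw [sub_zero] at h
    exact h.congr fun x => by simp only [Pi.mul_apply, u, v]; ring
  have hparts := integral_Ioi_mul_deriv_eq_deriv_mul hu hv
    (IntegrableOn.congr_fun
      ((integrableOn_exp_neg_mul_sub_exp_neg_mul_div_rpow hα1 hp hpq).const_mul (-α))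
      huv'.symm measurableSet_Ioi)
    (IntegrableOn.congr_fun ((hIq.const_mul q).sub (hIp.const_mul p))
      (fun x _ => (hu'v x).symm) measurableSet_Ioi)
    (tendsto_exp_neg_mul_sub_exp_neg_mul_mul_rpow_nhdsGT_zero hα1 hpq) h_infty
  have hlhs : ∫ x in Ioi (0 : ℝ), u x * v' x = -α * I := by
    rw [← integral_const_mul]; exact setIntegral_congr_fun measurableSet_Ioi huv'
  have hrhs : ∫ x in Ioi (0 : ℝ), u' x * v x = (q ^ α - p ^ α) * Gamma (1 - α) := by
    simp_rw [hu'v]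
    rw [integral_sub (hIq.const_mul q) (hIp.const_mul p), integral_const_mul, integral_const_mul,
      integral_rpow_neg_mul_exp_neg_mul hα1 hq, integral_rpow_neg_mul_exp_neg_mul hα1 hp,
      rpow_sub_one hq.ne', rpow_sub_one hp.ne']
    field_simp
  rw [hlhs, hrhs] at hparts
  rw [eq_div_iff hα0.ne']
  linarith

theorem integral_exp_neg_mul_sub_exp_neg_mul_div_rpow (hα0 : 0 < α) (hα1 : α < 1)
    (hp : 0 < p) (hq : 0 < q) :
    ∫ x in Ioi (0 : ℝ), (exp (-p * x) - exp (-q * x)) / x ^ (1 + α)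
      = Gamma (1 - α) * (q ^ α - p ^ α) / α := by
  rcases le_total p q with hpq | hqp
  · exact integral_exp_neg_mul_sub_exp_neg_mul_div_rpow_of_le hα0 hα1 hp hpq
  · calc ∫ x in Ioi (0 : ℝ), (exp (-p * x) - exp (-q * x)) / x ^ (1 + α)
        = -∫ x in Ioi (0 : ℝ), (exp (-q * x) - exp (-p * x)) / x ^ (1 + α) := by
          rw [← integral_neg]; simp only [← neg_div, neg_sub]
      _ = Gamma (1 - α) * (q ^ α - p ^ α) / α := by
          rw [integral_exp_neg_mul_sub_exp_neg_mul_div_rpow_of_le hα0 hα1 hq hqp]; ring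

end Frullani

theorem stmt_14_general (a α β c : ℝ) (ha0 : 0 < a) (hα0 : 0 < α) (hα1 : α < 1)
    (hβ : 0 < β) :
    ∫ x in Set.Ioi (0:ℝ),
        c * a ^ α * (Real.exp (-β * x) - Real.exp (-β * x / a)) / x ^ (1 + α)
      = c * Real.Gamma (1 - α) * β ^ α * (1 - a ^ α) / α := by
  have hν : (fun x : ℝ => c * a ^ α * (exp (-β * x) - exp (-β * x / a)) / x ^ (1 + α))
      = fun x => c * a ^ α * ((exp (-β * x) - exp (-(β / a) * x)) / x ^ (1 + α)) := by
    ext x; ring_nf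
  rw [hν, integral_const_mul,
    integral_exp_neg_mul_sub_exp_neg_mul_div_rpow hα0 hα1 hβ (div_pos hβ ha0),
    div_rpow hβ.le ha0.le]
  field_simp

theorem stmt_14 (a α β c : ℝ) (ha0 : 0 < a) (ha1 : a < 1) (hα0 : 0 < α) (hα1 : α < 1)
    (hβ : 0 < β) (hc : 0 < c) :
    ∫ x in Set.Ioi (0:ℝ),
        c * a ^ α * (Real.exp (-β * x) - Real.exp (-β * x / a)) / x ^ (1 + α)
      = c * Real.Gamma (1 - α) * β ^ α * (1 - a ^ α) / α :=
  stmt_14_general a α β c ha0 hα0 hα1 hβ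
end

section
/- For x > 0, 0 < a < 1, β > 0 and 0 < α < 1, the jump density of the CTS-OU compound Poisson part satisfies f_J(x) = (α x^{-α-1}/(β^α (a^{-α}-1) Γ(1-α))) (e^{-βx} - e^{-βx/a}) = ∫₁^{1/a} [(βv)^{1-α} x^{-α} e^{-βvx} / Γ(1-α)] · (α/(a^{-α}-1)) v^{α-1} dv, exhibiting f_J as a mixture of Gamma(1-α, βv) densities with mixing density (α/(a^{-α}-1)) v^{α-1} on [1,1/a]. -/
/-! On `[1, 1/a]` the factor `v ^ (1 - α)` of the Gamma(1-α, βv) density cancels against the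
mixing density `v ^ (α - 1)`, so the integrand is a constant multiple of `exp (-β x v)`, whose
integral is elementary. -/

open MeasureTheory Real

theorem Real.mul_rpow_mul_rpow_neg {β v : ℝ} (hβ : 0 ≤ β) (hv : 0 < v) (s : ℝ) :
    (β * v) ^ s * v ^ (-s) = β ^ s := by
  rw [mul_rpow hβ hv.le, rpow_neg hv.le, mul_assoc, mul_inv_cancel₀ (rpow_pos_of_pos hv s).ne',
    mul_one]

theorem intervalIntegral.integral_exp_mul {c : ℝ} (hc : c ≠ 0) (p q : ℝ) :
    ∫ v in p..q, exp (c * v) = c⁻¹ * (exp (c * q) - exp (c * p)) := by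
  rw [intervalIntegral.integral_comp_mul_left exp hc, integral_exp, smul_eq_mul]

theorem stmt_15_general (x a β α : ℝ) (hx : 0 < x) (ha0 : 0 < a)
    (hβ : 0 < β) :
    α * x ^ (-α - 1) / (β ^ α * (a ^ (-α) - 1) * Real.Gamma (1 - α))
        * (Real.exp (-β * x) - Real.exp (-β * x / a))
      = ∫ v in (1:ℝ)..(1/a),
          (β * v) ^ (1 - α) * x ^ (-α) * Real.exp (-β * v * x) / Real.Gamma (1 - α)
            * (α / (a ^ (-α) - 1) * v ^ (α - 1)) := by
  have hintegrand : ∀ v ∈ Set.uIcc (1 : ℝ) (1 / a),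
      (β * v) ^ (1 - α) * x ^ (-α) * exp (-β * v * x) / Gamma (1 - α)
        * (α / (a ^ (-α) - 1) * v ^ (α - 1))
      = β ^ (1 - α) * x ^ (-α) / Gamma (1 - α) * (α / (a ^ (-α) - 1))
        * exp (-(β * x) * v) := by
    intro v hv
    have hv0 : 0 < v := lt_of_lt_of_le (lt_min one_pos (by positivity)) hv.1
    rw [← Real.mul_rpow_mul_rpow_neg hβ.le hv0 (1 - α), neg_sub]
    ring_nf
  rw [intervalIntegral.integral_congr hintegrand, intervalIntegral.integral_const_mul,
    intervalIntegral.integral_exp_mul (neg_ne_zero.2 (by positivity)),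
    rpow_sub_one hx.ne', rpow_sub hβ, rpow_one]
  field_simp
  ring

theorem stmt_15 (x a β α : ℝ) (hx : 0 < x) (ha0 : 0 < a) (ha1 : a < 1)
    (hβ : 0 < β) (hα0 : 0 < α) (hα1 : α < 1) :
    α * x ^ (-α - 1) / (β ^ α * (a ^ (-α) - 1) * Real.Gamma (1 - α))
        * (Real.exp (-β * x) - Real.exp (-β * x / a))
      = ∫ v in (1:ℝ)..(1/a),
          (β * v) ^ (1 - α) * x ^ (-α) * Real.exp (-β * v * x) / Real.Gamma (1 - α)
            * (α / (a ^ (-α) - 1) * v ^ (α - 1)) :=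
  stmt_15_general x a β α hx ha0 hβ
end

section
/- Let ν_L(x) = c e^{-βx}/x^{1+α} on (0,∞) with c, β > 0, 0 < α < 1, and b, T > 0, a = e^{-bt}. Then the Lévy density ν_Z(x,t) = (1/(Tb x)) ∫_x^{x/a} ν_L(y) dy of Z(t) = ∫₀^t e^{-b(t-s)} dL(s) decomposes as ν_Z = ν_1 + ν_2 where ν_1(x) = c(1-a^α) e^{-βx/a}/(Tb α x^{1+α}) and ν_2(x) = (c/(Tb)) ∫₁^{1/a} (e^{-βwx} - e^{-βx/a})/(x^{1+α} w^{1+α}) dw, with ν_2(x) ≥ 0 for all x > 0. -/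
open MeasureTheory Real

theorem stmt_16 (c β α b T t : ℝ) (hc : 0 < c) (hβ : 0 < β) (hα0 : 0 < α) (hα1 : α < 1)
    (hb : 0 < b) (hT : 0 < T) (ht : 0 < t) :
    ∀ x : ℝ, 0 < x →
      ((1 / (T * b * x)) * (∫ y in x..(x / Real.exp (-b * t)), c * Real.exp (-β * y) / y ^ (1 + α))
        = c * (1 - Real.exp (-b * t) ^ α) * Real.exp (-β * x / Real.exp (-b * t))
              / (T * b * α * x ^ (1 + α))
          + (c / (T * b)) * ∫ w in (1:ℝ)..(1 / Real.exp (-b * t)),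
              (Real.exp (-β * w * x) - Real.exp (-β * x / Real.exp (-b * t)))
                / (x ^ (1 + α) * w ^ (1 + α))) ∧
      0 ≤ (c / (T * b)) * ∫ w in (1:ℝ)..(1 / Real.exp (-b * t)),
            (Real.exp (-β * w * x) - Real.exp (-β * x / Real.exp (-b * t)))
              / (x ^ (1 + α) * w ^ (1 + α)) := by
  intro x hx
  set a := Real.exp (-b * t) with ha
  have ha0 : 0 < a := Real.exp_pos _
  have ha1 : a < 1 := by
    rw [ha, Real.exp_lt_one_iff]; nlinarith
  have hia : 1 < 1 / a := by rw [lt_div_iff₀ ha0]; linarith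
  have hxa : 0 < x ^ (1 + α) := Real.rpow_pos_of_pos hx _
  set E := Real.exp (-β * x / a) with hE
  -- nonnegativity of the second integrand on [1, 1/a]
  have hnn : ∀ w ∈ Set.Icc (1:ℝ) (1/a),
      0 ≤ (Real.exp (-β * w * x) - E) / (x ^ (1 + α) * w ^ (1 + α)) := by
    intro w hw
    have hw1 : 1 ≤ w := hw.1
    have hw2 : w ≤ 1 / a := hw.2
    have hwpos : 0 < w := lt_of_lt_of_le one_pos hw1
    apply div_nonneg
    · have hwa : w * a ≤ 1 := by
        rw [← le_div_iff₀ ha0]; exact hw2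
      have : -β * x / a ≤ -β * w * x := by
        rw [div_le_iff₀ ha0]
        nlinarith [mul_pos hβ hx]
      simp only [sub_nonneg, hE]
      exact Real.exp_le_exp.mpr this
    · exact le_of_lt (mul_pos hxa (Real.rpow_pos_of_pos hwpos _))
  have key : (∫ y in x..(x / a), c * Real.exp (-β * y) / y ^ (1 + α))
      = x * ∫ w in (1:ℝ)..(1/a),
          (c * (Real.exp (-β * w * x) - E) / (x ^ (1 + α) * w ^ (1 + α))
            + (c * E / x ^ (1 + α)) * w ^ (-(1 + α))) := by
    have hsub := intervalIntegral.smul_integral_comp_mul_left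
      (a := (1:ℝ)) (b := 1/a) (fun y => c * Real.exp (-β * y) / y ^ (1 + α)) x
    simp only [smul_eq_mul, mul_one, mul_one_div] at hsub
    rw [← hsub]
    congr 1
    apply intervalIntegral.integral_congr
    intro w hw
    rw [Set.uIcc_of_le (le_of_lt hia)] at hw
    have hw1 : 1 ≤ w := hw.1
    have hwpos : 0 < w := lt_of_lt_of_le one_pos hw1
    have hmul : (x * w) ^ (1 + α) = x ^ (1 + α) * w ^ (1 + α) :=
      Real.mul_rpow hx.le hwpos.le
    have hwa : w ^ (-(1 + α)) = (w ^ (1 + α))⁻¹ := Real.rpow_neg hwpos.le _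
    have hwp : 0 < w ^ (1 + α) := Real.rpow_pos_of_pos hwpos _
    simp only [hmul, hwa]
    have hxw : -β * (x * w) = -β * w * x := by ring
    rw [hxw]
    field_simp
    ring
  have hInt1 : IntervalIntegrable
      (fun w => c * (Real.exp (-β * w * x) - E) / (x ^ (1 + α) * w ^ (1 + α)))
      volume 1 (1/a) := by
    apply ContinuousOn.intervalIntegrable
    apply ContinuousOn.div
    · fun_prop
    · apply ContinuousOn.mul continuousOn_const
      intro w hw
      apply ContinuousAt.continuousWithinAt
      apply Real.continuousAt_rpow_const
      left
      rw [Set.uIcc_of_le (le_of_lt hia)] at hw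
      exact ne_of_gt (lt_of_lt_of_le one_pos hw.1)
    · intro w hw
      rw [Set.uIcc_of_le (le_of_lt hia)] at hw
      have hwpos : 0 < w := lt_of_lt_of_le one_pos hw.1
      exact ne_of_gt (mul_pos hxa (Real.rpow_pos_of_pos hwpos _))
  have hInt2 : IntervalIntegrable
      (fun w => (c * E / x ^ (1 + α)) * w ^ (-(1 + α))) volume 1 (1/a) := by
    apply ContinuousOn.intervalIntegrable
    apply ContinuousOn.mul continuousOn_const
    intro w hw
    apply ContinuousAt.continuousWithinAt
    apply Real.continuousAt_rpow_const
    left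
    rw [Set.uIcc_of_le (le_of_lt hia)] at hw
    exact ne_of_gt (lt_of_lt_of_le one_pos hw.1)
  have hrpow : (∫ w in (1:ℝ)..(1/a), w ^ (-(1 + α))) = (1 - a ^ α) / α := by
    rw [integral_rpow]
    · have h1 : (1/a) ^ (-(1 + α) + 1) = a ^ α := by
        have : -(1 + α) + 1 = -α := by ring
        rw [this, one_div, Real.inv_rpow ha0.le, Real.rpow_neg ha0.le, inv_inv]
      have h2 : (1:ℝ) ^ (-(1 + α) + 1) = 1 := Real.one_rpow _
      rw [h1, h2]
      rw [show -(1 + α) + 1 = -α by ring]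
      rw [div_neg, ← neg_div, neg_sub]
    · right
      constructor
      · intro h; apply absurd hα0; rw [show α = 0 by linarith]; exact lt_irrefl 0
      · rw [Set.uIcc_of_le (le_of_lt hia)]
        intro h
        exact absurd h.1 (by norm_num)
  have hsplit : (∫ w in (1:ℝ)..(1/a),
      (c * (Real.exp (-β * w * x) - E) / (x ^ (1 + α) * w ^ (1 + α))
        + (c * E / x ^ (1 + α)) * w ^ (-(1 + α))))
      = c * (∫ w in (1:ℝ)..(1/a), (Real.exp (-β * w * x) - E) / (x ^ (1 + α) * w ^ (1 + α)))
        + (c * E / x ^ (1 + α)) * ((1 - a ^ α) / α) := by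
    rw [intervalIntegral.integral_add hInt1 hInt2,
      intervalIntegral.integral_const_mul, hrpow]
    congr 1
    rw [← intervalIntegral.integral_const_mul]
    apply intervalIntegral.integral_congr
    intro w hw
    ring
  constructor
  · rw [key, hsplit]
    have hTb : T * b ≠ 0 := ne_of_gt (mul_pos hT hb)
    field_simp
    ring
  · apply mul_nonneg (le_of_lt (div_pos hc (mul_pos hT hb)))
    apply intervalIntegral.integral_nonneg (le_of_lt hia)
    exact hnn
end
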